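/- arXiv:1110.0910 — 5 statements merged into one kernel-verified Lean document; each statement's English description precedes it below -/
import Mathlib

section
/- Let a, b ≥ 0 be real numbers with p := a² + b² > 0, and let t > 0. Then t⁻¹/((t⁻¹ + a)² + b²) > 1/((1 + a)² + b²) if and only if t lies strictly between 1 and p⁻¹, that is, if and only if (1 < t and t < p⁻¹) or (p⁻¹ < t and t < 1). -/
/-! Writing `s = t⁻¹` and `p = a² + b²`, cross-multiplying cancels the terms `2as` and leaves
`s((1 + a)² + b²) - ((s + a)² + b²) = (s - 1)(p - s)`, which is positive exactly when `s` lies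
strictly between `1` and `p`. -/

theorem sub_mul_sub_pos_iff_between {R : Type*} [Ring R] [LinearOrder R] [IsStrictOrderedRing R]
    {x y s : R} :
    0 < (s - x) * (y - s) ↔ (x < s ∧ s < y) ∨ (y < s ∧ s < x) := by
  simp only [mul_pos_iff, sub_pos, sub_neg, and_comm (a := s < x)]

theorem one_div_lt_div_sq_add_sq_iff {a b s : ℝ} (ha : 0 ≤ a) (hs : 0 < s) :
    1 / ((1 + a) ^ 2 + b ^ 2) < s / ((s + a) ^ 2 + b ^ 2) ↔
      0 < (s - 1) * (a ^ 2 + b ^ 2 - s) := by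
  have key : s * ((1 + a) ^ 2 + b ^ 2) - 1 * ((s + a) ^ 2 + b ^ 2)
      = (s - 1) * (a ^ 2 + b ^ 2 - s) := by ring
  rw [div_lt_div_iff₀ (by positivity) (by positivity), ← sub_pos, key]

theorem sojourn_time_general (a b t : ℝ) (ha : 0 ≤ a)
    (hp : 0 < a ^ 2 + b ^ 2) (ht : 0 < t) :
    t⁻¹ / ((t⁻¹ + a) ^ 2 + b ^ 2) > 1 / ((1 + a) ^ 2 + b ^ 2) ↔
      (1 < t ∧ t < (a ^ 2 + b ^ 2)⁻¹) ∨ ((a ^ 2 + b ^ 2)⁻¹ < t ∧ t < 1) := by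
  rw [gt_iff_lt, one_div_lt_div_sq_add_sq_iff ha (inv_pos.2 ht), sub_mul_sub_pos_iff_between,
    one_lt_inv₀ ht, inv_lt_one₀ ht, inv_lt_comm₀ ht hp, lt_inv_comm₀ hp ht]
  tauto

/-- Sojourn-time criterion (Proposition 5.3): for `a, b ≥ 0` with `p = a² + b² > 0` and
`t > 0`, one has `f_{a,b}(t) > f_{a,b}(1)` iff `t` lies strictly between `1` and `p⁻¹`. -/
theorem sojourn_time (a b t : ℝ) (ha : 0 ≤ a) (hb : 0 ≤ b)
    (hp : 0 < a ^ 2 + b ^ 2) (ht : 0 < t) :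
    t⁻¹ / ((t⁻¹ + a) ^ 2 + b ^ 2) > 1 / ((1 + a) ^ 2 + b ^ 2) ↔
      (1 < t ∧ t < (a ^ 2 + b ^ 2)⁻¹) ∨ ((a ^ 2 + b ^ 2)⁻¹ < t ∧ t < 1) :=
  sojourn_time_general a b t ha hp ht
end

section
/- Let M > 0 and λ > 0 be real numbers. Then there exist constants c₁, c₂ > 0, depending only on M and λ, such that for all real t > 1 and all x, z ∈ [0, M]: if t·((t⁻¹ + x²/4)² + z²) < λ⁻¹·((1 + x²/4)² + z²), then x < c₁·t^{-1/4} and z < c₂·t^{-1/2}. -/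
/-!
On `[0, M]²` the right-hand side of the hypothesis is at most the constant
`K = λ⁻¹ ((1 + M²/4)² + M²)`, while the left-hand side dominates both `t x⁴ / 16` and `t z²`.
Hence `x⁴ < 16 K / t` and `z² < K / t`, and taking fourth and square roots gives the decay rates.
-/

open Real

/-- `shiftedGauge 0 x z = x⁴/16 + z²` is, up to normalization, the fourth power of the
Korányi gauge. -/
noncomputable def shiftedGauge (s x z : ℝ) : ℝ := (s + x ^ 2 / 4) ^ 2 + z ^ 2

lemma pow_four_div_le_shiftedGauge {s : ℝ} (hs : 0 ≤ s) (x z : ℝ) :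
    x ^ 4 / 16 ≤ shiftedGauge s x z := by
  unfold shiftedGauge
  nlinarith [sq_nonneg x, sq_nonneg z]

lemma sq_le_shiftedGauge (s x z : ℝ) : z ^ 2 ≤ shiftedGauge s x z := by
  unfold shiftedGauge
  nlinarith [sq_nonneg (s + x ^ 2 / 4)]

lemma shiftedGauge_mono {s x z x' z' : ℝ} (hs : 0 ≤ s) (hx : 0 ≤ x) (hxx' : x ≤ x')
    (hz : 0 ≤ z) (hzz' : z ≤ z') : shiftedGauge s x z ≤ shiftedGauge s x' z' := by
  unfold shiftedGauge
  gcongr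

lemma lt_mul_rpow_of_rpow_mul_lt {p a t C : ℝ} (hp : 0 < p) (ha : 0 ≤ a) (ht : 0 < t)
    (h : a ^ p * t < C) : a < C ^ (1 / p) * t ^ (-1 / p) := by
  have hC : 0 < C := lt_of_le_of_lt (by positivity) h
  calc a < (C / t) ^ p⁻¹ :=
        (lt_rpow_inv_iff_of_pos ha (div_pos hC ht).le hp).2 ((lt_div_iff₀ ht).2 h)
    _ = C ^ (1 / p) * t ^ (-1 / p) := by
        rw [div_rpow hC.le ht.le, neg_div, rpow_neg ht.le, one_div, div_eq_mul_inv]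

theorem power_decay_bounds_general (M lam : ℝ) (hlam : 0 < lam) :
    ∃ c₁ > (0 : ℝ), ∃ c₂ > (0 : ℝ), ∀ t : ℝ, 1 < t →
      ∀ x z : ℝ, x ∈ Set.Icc 0 M → z ∈ Set.Icc 0 M →
        t * ((t⁻¹ + x ^ 2 / 4) ^ 2 + z ^ 2) < lam⁻¹ * ((1 + x ^ 2 / 4) ^ 2 + z ^ 2) →
        x < c₁ * t ^ (-(1 : ℝ) / 4) ∧ z < c₂ * t ^ (-(1 : ℝ) / 2) := by
  obtain ⟨K, hK_def⟩ : ∃ K, K = lam⁻¹ * shiftedGauge 1 M M := ⟨_, rfl⟩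
  have hK : 0 < K := by rw [hK_def, shiftedGauge]; positivity
  refine ⟨(16 * K) ^ ((1 : ℝ) / 4), by positivity, K ^ ((1 : ℝ) / 2), by positivity, ?_⟩
  rintro t ht x z ⟨hx, hxM⟩ ⟨hz, hzM⟩ h
  have ht₀ : 0 < t := by linarith
  have hbound : t * shiftedGauge t⁻¹ x z < K := hK_def ▸ h.trans_le
    (mul_le_mul_of_nonneg_left (shiftedGauge_mono zero_le_one hx hxM hz hzM) (by positivity))
  have hx4 : x ^ (4 : ℝ) * t < 16 * K := by
    rw [rpow_ofNat]
    nlinarith [pow_four_div_le_shiftedGauge (inv_nonneg.2 ht₀.le) x z]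
  have hz2 : z ^ (2 : ℝ) * t < K := by
    rw [rpow_ofNat]
    nlinarith [sq_le_shiftedGauge t⁻¹ x z]
  exact ⟨lt_mul_rpow_of_rpow_mul_lt (by norm_num) hx ht₀ hx4,
    lt_mul_rpow_of_rpow_mul_lt (by norm_num) hz ht₀ hz2⟩

/-- Real-variable content of Lemma 6.3: for `M, λ > 0` there are constants
`c₁, c₂ > 0`, depending only on `M` and `λ`, such that for all `t > 1` and all
`x, z ∈ [0, M]`, if `t·((t⁻¹ + x²/4)² + z²) < λ⁻¹·((1 + x²/4)² + z²)` then
`x < c₁·t^{-1/4}` and `z < c₂·t^{-1/2}`. -/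
theorem power_decay_bounds (M lam : ℝ) (hM : 0 < M) (hlam : 0 < lam) :
    ∃ c₁ > (0 : ℝ), ∃ c₂ > (0 : ℝ), ∀ t : ℝ, 1 < t →
      ∀ x z : ℝ, x ∈ Set.Icc 0 M → z ∈ Set.Icc 0 M →
        t * ((t⁻¹ + x ^ 2 / 4) ^ 2 + z ^ 2) < lam⁻¹ * ((1 + x ^ 2 / 4) ^ 2 + z ^ 2) →
        x < c₁ * t ^ (-(1 : ℝ) / 4) ∧ z < c₂ * t ^ (-(1 : ℝ) / 2) :=
  power_decay_bounds_general M lam hlam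
end

section
/- Let r₀ > 1 and s ≥ s₃ > 0 be real numbers. Then there exists a constant C > 0, depending only on r₀, s and s₃, such that for all real r > 0 and a, b ≥ 0 satisfying a² + b² > r₀⁻¹ and r·r₀⁻¹/((r₀⁻¹ + a)² + b²) ≤ s, one has r·t⁻¹/((t⁻¹ + a)² + b²) ≤ s₃ for every t ≥ C. -/
/-!
Write `N = a² + b²`. At the parameter `u = r₀⁻¹ < 1` the hypothesis `N > u` gives `u² < N`, so
the denominator `(u + a)² + b²` is at most `4N`; the height bound at time `r₀` therefore yields
`r ≤ 4 s r₀ N`. At any time `t` the denominator is at least `N`, so the height is at most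
`r t⁻¹ / N ≤ 4 s r₀ t⁻¹`, which is below `s₃` once `t ≥ 4 s r₀ / s₃`.
-/

lemma add_sq_add_sq_le_four_mul {u a b : ℝ} (hu : u ^ 2 ≤ a ^ 2 + b ^ 2) :
    (u + a) ^ 2 + b ^ 2 ≤ 4 * (a ^ 2 + b ^ 2) := by
  nlinarith [sq_nonneg (u - a)]

lemma mul_le_four_mul_of_div_le {r u a b s : ℝ} (hr : 0 ≤ r) (ha : 0 ≤ a) (hu₀ : 0 < u)
    (hu₁ : u ≤ 1) (hN : u < a ^ 2 + b ^ 2) (h : r * u / ((u + a) ^ 2 + b ^ 2) ≤ s) :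
    r * u ≤ 4 * s * (a ^ 2 + b ^ 2) := by
  have hD : 0 < (u + a) ^ 2 + b ^ 2 := by positivity
  have hs : 0 ≤ s := (div_nonneg (mul_nonneg hr hu₀.le) hD.le).trans h
  have hu_sq : u ^ 2 ≤ a ^ 2 + b ^ 2 := by nlinarith
  calc r * u ≤ s * ((u + a) ^ 2 + b ^ 2) := (div_le_iff₀ hD).mp h
    _ ≤ s * (4 * (a ^ 2 + b ^ 2)) := by gcongr; exact add_sq_add_sq_le_four_mul hu_sq
    _ = 4 * s * (a ^ 2 + b ^ 2) := by ring

/-- Real-variable content of Lemma 7.1 (maxexists), big Bruhat cell case: for `r₀ > 1`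
and `s ≥ s₃ > 0` there is `C > 0`, depending only on `r₀, s, s₃`, such that whenever
`r > 0` and `a, b ≥ 0` satisfy `a² + b² > r₀⁻¹` and `r·r₀⁻¹/((r₀⁻¹ + a)² + b²) ≤ s`,
the height `r·t⁻¹/((t⁻¹ + a)² + b²)` is at most `s₃` for all `t ≥ C`. -/
theorem descent_time_bounded (r₀ s s₃ : ℝ) (hr₀ : 1 < r₀) (hs : s₃ ≤ s) (hs₃ : 0 < s₃) :
    ∃ C > (0 : ℝ), ∀ r a b : ℝ, 0 < r → 0 ≤ a → 0 ≤ b →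
      a ^ 2 + b ^ 2 > r₀⁻¹ →
      r * r₀⁻¹ / ((r₀⁻¹ + a) ^ 2 + b ^ 2) ≤ s →
      ∀ t : ℝ, C ≤ t → r * t⁻¹ / ((t⁻¹ + a) ^ 2 + b ^ 2) ≤ s₃ := by
  have hr₀_pos : 0 < r₀ := one_pos.trans hr₀
  have hs_pos : 0 < s := hs₃.trans_le hs
  refine ⟨4 * s * r₀ / s₃, by positivity, fun r a b hr ha _ hN hheight t ht => ?_⟩
  have hN_pos : 0 < a ^ 2 + b ^ 2 := (inv_pos.mpr hr₀_pos).trans hN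
  have hr_le : r ≤ 4 * s * r₀ * (a ^ 2 + b ^ 2) :=
    calc r = r * r₀⁻¹ * r₀ := by field_simp
      _ ≤ 4 * s * (a ^ 2 + b ^ 2) * r₀ := by
        refine mul_le_mul_of_nonneg_right ?_ hr₀_pos.le
        exact mul_le_four_mul_of_div_le hr.le ha (inv_pos.mpr hr₀_pos)
          (inv_le_one_of_one_le₀ hr₀.le) hN hheight
      _ = 4 * s * r₀ * (a ^ 2 + b ^ 2) := by ring
  have ht_inv : t⁻¹ ≤ s₃ / (4 * s * r₀) := by
    simpa only [inv_div] using inv_anti₀ (by positivity) ht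
  have ht_inv_nonneg : 0 ≤ t⁻¹ := inv_nonneg.mpr (le_trans (by positivity) ht)
  calc r * t⁻¹ / ((t⁻¹ + a) ^ 2 + b ^ 2)
      ≤ r * t⁻¹ / (a ^ 2 + b ^ 2) := by
        gcongr; linarith
    _ ≤ 4 * s * r₀ * (a ^ 2 + b ^ 2) * (s₃ / (4 * s * r₀)) / (a ^ 2 + b ^ 2) := by gcongr
    _ = s₃ := by field_simp
end

section
/- Let L ∈ ℕ and let j₀ ≥ 1 be a natural number. Consider the family 𝒱 of all subsets V ⊆ {0, 1, …, L−1} with the following property: whenever i, j ∈ V with i < j and no element of V lies strictly between i and j, then either j − i = 1 or j − i > 2·j₀. Then the cardinality of 𝒱 is at most ((2·j₀)²)^{⌈L/(2·j₀−1)⌉}. -/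
open scoped Classical

private lemma finset_interval (S : Finset ℕ) (hS : S.Nonempty)
    (hstep : ∀ i ∈ S, ∀ j ∈ S, i < j → i + 1 ∈ S) :
    S = Finset.Ico (S.min' hS) (S.min' hS + S.card) := by
  have hmM : S.min' hS ≤ S.max' hS := S.min'_le _ (S.max'_mem hS)
  have hsub : S ⊆ Finset.Icc (S.min' hS) (S.max' hS) := fun x hx =>
    Finset.mem_Icc.mpr ⟨S.min'_le x hx, S.le_max' x hx⟩
  have hcard : S.card ≤ S.max' hS - S.min' hS + 1 := by
    have := Finset.card_le_card hsub
    rw [Nat.card_Icc] at this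
    omega
  have key : ∀ d, S.min' hS + d ≤ S.max' hS → S.min' hS + d ∈ S := by
    intro d
    induction d with
    | zero => intro _; simpa using S.min'_mem hS
    | succ n ih =>
      intro h
      have h1 : S.min' hS + n ∈ S := ih (by omega)
      have h2 := hstep _ h1 _ (S.max'_mem hS) (by omega)
      simpa [Nat.add_assoc] using h2
  refine (Finset.eq_of_subset_of_card_le ?_ ?_).symm
  · intro k hk
    rw [Finset.mem_Ico] at hk
    have hk2 : S.min' hS + (k - S.min' hS) ∈ S := key _ (by omega)
    simpa [Nat.add_sub_cancel' hk.1] using hk2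
  · simp [Nat.card_Ico]

private def winS (a w : ℕ) (V : Finset ℕ) : Finset ℕ :=
  V.filter (fun k => a ≤ k ∧ k < a + w)

private noncomputable def winOff (a w : ℕ) (V : Finset ℕ) : ℕ :=
  if h : (winS a w V).Nonempty then (winS a w V).min' h - a else 0

private lemma winS_step (j₀ w a : ℕ) (hw : w ≤ 2 * j₀ + 1) (V : Finset ℕ)
    (hV : ∀ i ∈ V, ∀ j ∈ V, i < j → (∀ k ∈ V, ¬(i < k ∧ k < j)) →
      j - i = 1 ∨ j - i > 2 * j₀) :
    ∀ i ∈ winS a w V, ∀ j ∈ winS a w V, i < j → i + 1 ∈ winS a w V := by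
  intro i hi j hj hij
  simp only [winS, Finset.mem_filter] at hi hj
  have hjT : j ∈ V.filter (fun k => i < k ∧ k ≤ j) :=
    Finset.mem_filter.mpr ⟨hj.1, hij, le_refl j⟩
  have hTne : (V.filter (fun k => i < k ∧ k ≤ j)).Nonempty := ⟨j, hjT⟩
  have hmT := (V.filter (fun k => i < k ∧ k ≤ j)).min'_mem hTne
  rw [Finset.mem_filter] at hmT
  have hnone : ∀ k ∈ V, ¬(i < k ∧ k <
      (V.filter (fun k => i < k ∧ k ≤ j)).min' hTne) := by
    rintro k hk ⟨h1, h2⟩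
    have hkT : k ∈ V.filter (fun k => i < k ∧ k ≤ j) :=
      Finset.mem_filter.mpr ⟨hk, h1, by omega⟩
    have := Finset.min'_le _ k hkT
    omega
  have hd := hV i hi.1 _ hmT.1 hmT.2.1 hnone
  have hmeq : (V.filter (fun k => i < k ∧ k ≤ j)).min' hTne = i + 1 := by omega
  simp only [winS, Finset.mem_filter]
  exact ⟨hmeq ▸ hmT.1, by omega, by omega⟩

private lemma winS_card (a w : ℕ) (V : Finset ℕ) : (winS a w V).card ≤ w := by
  have hsub : winS a w V ⊆ Finset.Ico a (a + w) := fun k hk => by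
    rw [Finset.mem_Ico]; exact (Finset.mem_filter.mp hk).2
  have := Finset.card_le_card hsub
  simpa [Nat.card_Ico] using this

private lemma winOff_lt (a w : ℕ) (hw : 0 < w) (V : Finset ℕ) : winOff a w V < w := by
  rw [winOff]
  split_ifs with h
  · obtain ⟨-, h1, h2⟩ := Finset.mem_filter.mp ((winS a w V).min'_mem h)
    omega
  · exact hw

private lemma winS_eq (j₀ w a : ℕ) (hw : w ≤ 2 * j₀ + 1) (V : Finset ℕ)
    (hV : ∀ i ∈ V, ∀ j ∈ V, i < j → (∀ k ∈ V, ¬(i < k ∧ k < j)) →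
      j - i = 1 ∨ j - i > 2 * j₀) :
    winS a w V = Finset.Ico (a + winOff a w V) (a + winOff a w V + (winS a w V).card) := by
  by_cases h : (winS a w V).Nonempty
  · have hstep := winS_step j₀ w a hw V hV
    have hIco := finset_interval _ h hstep
    have hmin : a ≤ (winS a w V).min' h := by
      have := (winS a w V).min'_mem h
      simp only [winS, Finset.mem_filter] at this
      exact this.2.1
    rw [winOff, dif_pos h, Nat.add_sub_cancel' hmin]
    exact hIco
  · have h' := Finset.not_nonempty_iff_eq_empty.mp h
    rw [winOff, dif_neg h, h']
    simp

/-- Combinatorial content of Lemma 7.5 (numberpartition): the number of subsets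
`V ⊆ {0, …, L−1}` such that any two consecutive elements of `V` are at distance `1`
or at distance more than `2·j₀` is at most `((2·j₀)²)^{⌈L/(2·j₀−1)⌉}`. -/
theorem count_separated_subsets (L j₀ : ℕ) (hj₀ : 1 ≤ j₀) :
    ((Finset.range L).powerset.filter (fun V : Finset ℕ =>
        ∀ i ∈ V, ∀ j ∈ V, i < j → (∀ k ∈ V, ¬(i < k ∧ k < j)) →
          j - i = 1 ∨ j - i > 2 * j₀)).card ≤
      ((2 * j₀) ^ 2) ^ ((L + (2 * j₀ - 1) - 1) / (2 * j₀ - 1)) := by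
  classical
  set w := 2 * j₀ - 1 with hwdef
  have hw0 : 0 < w := by omega
  have h2j : 0 < 2 * j₀ := by omega
  set N := (L + w - 1) / w with hNdef
  have hLN : L ≤ N * w := by
    have h1 : N * w + (L + w - 1) % w = L + w - 1 := by
      rw [hNdef]; exact Nat.div_add_mod' _ _
    have h2 : (L + w - 1) % w < w := Nat.mod_lt _ hw0
    omega
  set F : Finset ℕ → (Fin N → Fin (2 * j₀) × Fin (2 * j₀)) := fun V t =>
    (⟨winOff (↑t * w) w V % (2 * j₀), Nat.mod_lt _ h2j⟩,
     ⟨(winS (↑t * w) w V).card % (2 * j₀), Nat.mod_lt _ h2j⟩) with hF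
  have hmain : ((Finset.range L).powerset.filter (fun V : Finset ℕ =>
        ∀ i ∈ V, ∀ j ∈ V, i < j → (∀ k ∈ V, ¬(i < k ∧ k < j)) →
          j - i = 1 ∨ j - i > 2 * j₀)).card ≤
      (Finset.univ : Finset (Fin N → Fin (2 * j₀) × Fin (2 * j₀))).card := by
    apply Finset.card_le_card_of_injOn F (fun V _ => Finset.mem_univ _)
    intro V hVm V' hVm' hFF
    simp only [Finset.coe_filter, Set.mem_setOf_eq, Finset.mem_powerset] at hVm hVm'
    have key : ∀ t, t < N → winS (t * w) w V = winS (t * w) w V' := by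
      intro t ht
      have e := congrFun hFF ⟨t, ht⟩
      rw [hF] at e
      have e1 : winOff (t * w) w V % (2 * j₀) = winOff (t * w) w V' % (2 * j₀) := by
        have := congrArg (fun p => (p.1 : ℕ)) e
        simpa using this
      have e2 : (winS (t * w) w V).card % (2 * j₀) =
          (winS (t * w) w V').card % (2 * j₀) := by
        have := congrArg (fun p => (p.2 : ℕ)) e
        simpa using this
      have ho1 : winOff (t * w) w V < 2 * j₀ :=
        lt_of_lt_of_le (winOff_lt _ _ hw0 _) (by omega)
      have ho2 : winOff (t * w) w V' < 2 * j₀ :=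
        lt_of_lt_of_le (winOff_lt _ _ hw0 _) (by omega)
      have hc1 : (winS (t * w) w V).card < 2 * j₀ :=
        lt_of_le_of_lt (winS_card _ _ _) (by omega)
      have hc2 : (winS (t * w) w V').card < 2 * j₀ :=
        lt_of_le_of_lt (winS_card _ _ _) (by omega)
      rw [Nat.mod_eq_of_lt ho1, Nat.mod_eq_of_lt ho2] at e1
      rw [Nat.mod_eq_of_lt hc1, Nat.mod_eq_of_lt hc2] at e2
      rw [winS_eq j₀ w (t * w) (by omega) V hVm.2,
        winS_eq j₀ w (t * w) (by omega) V' hVm'.2, e1, e2]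
    have side : ∀ (U U' : Finset ℕ), U ⊆ Finset.range L →
        (∀ t, t < N → winS (t * w) w U = winS (t * w) w U') → ∀ x ∈ U, x ∈ U' := by
      intro U U' hU hS x hx
      have hxL : x < L := Finset.mem_range.mp (hU hx)
      have hdm : x / w * w + x % w = x := Nat.div_add_mod' x w
      have hmod : x % w < w := Nat.mod_lt x hw0
      have ht : x / w < N := by
        rw [Nat.div_lt_iff_lt_mul hw0]
        omega
      have hx1 : x ∈ winS ((x / w) * w) w U := by
        simp only [winS, Finset.mem_filter]
        exact ⟨hx, by omega, by omega⟩
      rw [hS _ ht] at hx1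
      simp only [winS, Finset.mem_filter] at hx1
      exact hx1.1
    ext x
    exact ⟨fun hx => side V V' hVm.1 key x hx,
      fun hx => side V' V hVm'.1 (fun t ht => (key t ht).symm) x hx⟩
  calc _ ≤ (Finset.univ : Finset (Fin N → Fin (2 * j₀) × Fin (2 * j₀))).card := hmain
    _ = ((2 * j₀) ^ 2) ^ N := by
        rw [Finset.card_univ]
        simp [Fintype.card_fun, pow_two]
end

section
/- Let a : ℕ → ℝ be a sequence with 0 ≤ a(j) ≤ 1 for all j. Let K, L₀ ≥ 1 and L be natural numbers with K·L₀ ≤ L ≤ (K+1)·L₀. Then there exists n ∈ {0, 1, …, L₀−1} such that (1/K)·∑_{k=0}^{K−1} a(k·L₀ + n) ≥ (1/L)·∑_{j=0}^{L−1} a(j) − L₀/L. -/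
/-!
Splitting `[0, K L₀)` into the `L₀` residue classes mod `L₀`, the largest of the `L₀` stride sums
is at least `1/L₀` of the total, so its average is at least the average of `a` over `[0, K L₀)`.
Since `0 ≤ a ≤ 1`, passing to `[0, L)` costs at most `L - K L₀ ≤ L₀` in the sum, while the
normalisation `1/(K L₀) ≥ 1/L` only helps.
-/

open Finset
open scoped BigOperators

theorem sum_range_mul_eq_sum_sum_stride {M : Type*} [AddCommMonoid M] (a : ℕ → M) (K L₀ : ℕ) :
    ∑ j ∈ range (K * L₀), a j = ∑ n ∈ range L₀, ∑ k ∈ range K, a (k * L₀ + n) := by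
  induction K with
  | zero => simp
  | succ K ih =>
    rw [Nat.succ_mul, sum_range_add, ih]
    simp only [sum_range_succ, sum_add_distrib]

theorem exists_sum_range_mul_div_le_sum_stride (a : ℕ → ℝ) (K : ℕ) {L₀ : ℕ} (hL₀ : 0 < L₀) :
    ∃ n < L₀, (∑ j ∈ range (K * L₀), a j) / L₀ ≤ ∑ k ∈ range K, a (k * L₀ + n) := by
  obtain ⟨n, hn, hle⟩ := exists_le_of_le_expect (nonempty_range_iff.2 hL₀.ne')
    (le_refl (𝔼 n ∈ range L₀, ∑ k ∈ range K, a (k * L₀ + n)))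
  rw [expect_eq_sum_div_card, card_range, ← sum_range_mul_eq_sum_sum_stride] at hle
  exact ⟨n, mem_range.1 hn, hle⟩

theorem sum_range_sub_sum_range_le (f : ℕ → ℝ) (hf : ∀ j, f j ≤ 1) {m n : ℕ} (hmn : m ≤ n) :
    ∑ j ∈ range n, f j - ∑ j ∈ range m, f j ≤ (n - m : ℕ) := by
  rw [← sum_Ico_eq_sub _ hmn, ← Nat.card_Ico m n]
  simpa using sum_le_card_nsmul (Ico m n) f 1 fun j _ ↦ hf j

/-- Pigeonhole averaging estimate from the proof of Lemma 8.8 (manyinY): reordering a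
Birkhoff average of length `L` into `K` blocks of step length `L₀` with offset `n`, one
of the `L₀` offsets achieves an average at least the full average minus `L₀/L`. -/
theorem pigeonhole_averaging (a : ℕ → ℝ) (ha : ∀ j, 0 ≤ a j ∧ a j ≤ 1)
    (K L₀ L : ℕ) (hK : 1 ≤ K) (hL₀ : 1 ≤ L₀)
    (h1 : K * L₀ ≤ L) (h2 : L ≤ (K + 1) * L₀) :
    ∃ n < L₀, (K : ℝ)⁻¹ * ∑ k ∈ Finset.range K, a (k * L₀ + n) ≥
      (L : ℝ)⁻¹ * ∑ j ∈ Finset.range L, a j - (L₀ : ℝ) / L := by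
  obtain ⟨n, hn, hstride⟩ := exists_sum_range_mul_div_le_sum_stride a K hL₀
  refine ⟨n, hn, ?_⟩
  set S := ∑ j ∈ range (K * L₀), a j
  have hS : 0 ≤ S := sum_nonneg fun j _ ↦ (ha j).1
  have htail : ∑ j ∈ range L, a j - S ≤ L₀ :=
    (sum_range_sub_sum_range_le a (fun j ↦ (ha j).2) h1).trans
      (by exact_mod_cast (by rw [add_one_mul] at h2; omega : L - K * L₀ ≤ L₀))
  calc (L : ℝ)⁻¹ * ∑ j ∈ range L, a j - L₀ / L = (∑ j ∈ range L, a j - L₀) / L := by ring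
    _ ≤ S / L := by gcongr; linarith
    _ ≤ S / (K * L₀ : ℕ) := div_le_div_of_nonneg_left hS (by positivity) (by exact_mod_cast h1)
    _ = (K : ℝ)⁻¹ * (S / L₀) := by push_cast; ring
    _ ≤ (K : ℝ)⁻¹ * ∑ k ∈ range K, a (k * L₀ + n) := by gcongr
end
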